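/- Fix ε > 0 and p ∈ (0, e^{−ε}), and let λ̲(p) ∈ (0,∞) be the unique zero of λ ↦ Γ₁(p,λ). Then p + Δ_ε(p, λ̲(p)) = (p + λ̲(p))/(1 + λ̲(p)) ∈ (p, 1), kl( p + Δ_ε(p, λ̲(p)) ‖ p ) = ε, and Δ_ε(p, λ̲(p)) = inf_{λ ∈ (0,∞)} Δ_ε(p,λ) = ω(p, ε) > 0. -/

import Mathlib

open Real

/-- Bernoulli Kullback–Leibler divergence `kl(a‖b)`. -/
noncomputable def klBer (a b : ℝ) : ℝ :=
  a * Real.log (a / b) + (1 - a) * Real.log ((1 - a) / (1 - b))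

/-- `ω(p, ε)`. -/
noncomputable def omegaKL (p ε : ℝ) : ℝ :=
  if p = 0 then 0
  else if p ≤ Real.exp (-ε) then
    sInf {η : ℝ | η ∈ Set.Icc 0 (1 - p) ∧ klBer (p + η) p = ε}
  else 1 - p

/-- `Δ_ε(r, λ) = (log(1+λ) + ε)/log(1 + λ/r) - r`. -/
noncomputable def DeltaEps (ε r lam : ℝ) : ℝ :=
  (Real.log (1 + lam) + ε) / Real.log (1 + lam / r) - r

/-- `Γ₁(p,λ) = (p+λ) log(1+λ/p) - (1+λ)(ε + log(1+λ))`. -/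
noncomputable def Gamma1 (ε p lam : ℝ) : ℝ :=
  (p + lam) * Real.log (1 + lam / p) - (1 + lam) * (ε + Real.log (1 + lam))

/-!
The Bernoulli law `q_λ = (p+λ)/(1+λ)` is the exponential tilt of `p` by `t = log(1+λ/p)`,
whose log-partition function is `log(1+λ)`. Hence
`kl(x‖p) = x log(1+λ/p) - log(1+λ) + kl(x‖q_λ)`, which gives the closed form of `kl(q_λ‖p)`,
the Donsker–Varadhan bound `x log(1+λ/p) - log(1+λ) ≤ kl(x‖p)`, and the strict monotonicity
of `kl(·‖p)` on `(p, 1)`. The bound says exactly that `x - p ≤ Δ_ε(p, λ)` whenever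
`kl(x‖p) ≤ ε`, while `Γ₁(p, λ) = 0` says that `p + Δ_ε(p, λ) = q_λ` and `kl(q_λ‖p) = ε`;
so the root gives the minimum of `Δ_ε(p, ·)`, and it equals `ω(p, ε)` by monotonicity.
-/

open InformationTheory

section klBer

variable {x p q lam : ℝ}

@[simp]
lemma klBer_self (a : ℝ) : klBer a a = 0 := by
  simp [klBer]

lemma klBer_eq_klFun (hq0 : q ≠ 0) (hq1 : q ≠ 1) :
    klBer x q = q * klFun (x / q) + (1 - q) * klFun ((1 - x) / (1 - q)) := by
  have : 1 - q ≠ 0 := sub_ne_zero.mpr hq1.symm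
  simp only [klBer, klFun]
  field_simp
  ring

lemma klBer_nonneg (hx0 : 0 ≤ x) (hx1 : x ≤ 1) (hq0 : 0 < q) (hq1 : q < 1) :
    0 ≤ klBer x q := by
  rw [klBer_eq_klFun hq0.ne' hq1.ne]
  have h1q : 0 < 1 - q := by linarith
  have := klFun_nonneg (div_nonneg hx0 hq0.le)
  have := klFun_nonneg (div_nonneg (sub_nonneg.mpr hx1) h1q.le)
  positivity

lemma klBer_eq_add_klBer_tilt (hp0 : 0 < p) (hp1 : p < 1) (hl : 0 < p + lam)
    (hx0 : 0 < x) (hx1 : x < 1) :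
    klBer x p = x * log (1 + lam / p) - log (1 + lam)
      + klBer x ((p + lam) / (1 + lam)) := by
  have h1l : 0 < 1 + lam := by linarith
  have h1p : 0 < 1 - p := by linarith
  have h1x : 0 < 1 - x := by linarith
  have hq : 0 < (p + lam) / (1 + lam) := by positivity
  have h1q : 1 - (p + lam) / (1 + lam) = (1 - p) / (1 + lam) := by
    field_simp
    ring
  have hL : 1 + lam / p = (p + lam) / p := by field_simp
  simp only [klBer]
  rw [h1q, hL, log_div hx0.ne' hp0.ne', log_div hx0.ne' hq.ne', log_div h1x.ne' h1p.ne',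
    log_div h1x.ne' (by positivity), log_div hl.ne' hp0.ne', log_div hl.ne' h1l.ne',
    log_div h1p.ne' h1l.ne']
  ring

lemma klBer_tilt (hp0 : 0 < p) (hp1 : p < 1) (hl : 0 < p + lam) :
    klBer ((p + lam) / (1 + lam)) p
      = (p + lam) / (1 + lam) * log (1 + lam / p) - log (1 + lam) := by
  have h1l : 0 < 1 + lam := by linarith
  rw [klBer_eq_add_klBer_tilt hp0 hp1 hl (by positivity) ((div_lt_one h1l).mpr (by linarith)),
    klBer_self, add_zero]

lemma mul_log_sub_log_le_klBer (hp0 : 0 < p) (hp1 : p < 1) (hl : 0 < p + lam)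
    (hx0 : 0 < x) (hx1 : x < 1) :
    x * log (1 + lam / p) - log (1 + lam) ≤ klBer x p := by
  have h1l : 0 < 1 + lam := by linarith
  rw [klBer_eq_add_klBer_tilt hp0 hp1 hl hx0 hx1, le_add_iff_nonneg_right]
  exact klBer_nonneg hx0.le hx1.le (by positivity) ((div_lt_one h1l).mpr (by linarith))

lemma klBer_lt_klBer_of_lt {y : ℝ} (hp0 : 0 < p) (hpx : p < x) (hxy : x < y) (hy1 : y < 1) :
    klBer x p < klBer y p := by
  have h1x : 0 < 1 - x := by linarith
  obtain ⟨l, hl_def⟩ : ∃ l, l = (x - p) / (1 - x) := ⟨_, rfl⟩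
  have hl : 0 < l := hl_def ▸ div_pos (by linarith) h1x
  -- `x = q_l` is the tilt of `p` whose Donsker–Varadhan bound is tight at `x`
  have hx : (p + l) / (1 + l) = x := by
    rw [hl_def, div_eq_iff (by positivity)]
    field_simp
    ring
  have hL : 0 < log (1 + l / p) := log_pos (by simp [hl, hp0])
  have hp1 : p < 1 := by linarith
  have h_eq := klBer_tilt hp0 hp1 (show 0 < p + l by linarith)
  rw [hx] at h_eq
  have h_le := mul_log_sub_log_le_klBer hp0 hp1 (show 0 < p + l by linarith) (by linarith) hy1
  nlinarith

end klBer

section DeltaEps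

variable {ε p x lam : ℝ}

lemma sub_le_DeltaEps_of_klBer_le (hp0 : 0 < p) (hp1 : p < 1) (hx0 : 0 < x) (hx1 : x < 1)
    (hkl : klBer x p ≤ ε) (hl : 0 < lam) :
    x - p ≤ DeltaEps ε p lam := by
  have hL : 0 < log (1 + lam / p) := log_pos (by simp [hl, hp0])
  have := mul_log_sub_log_le_klBer hp0 hp1 (show 0 < p + lam by linarith) hx0 hx1
  rw [DeltaEps, sub_le_sub_iff_right, le_div_iff₀ hL]
  linarith

lemma DeltaEps_eq_of_Gamma1_eq_zero (hp0 : 0 < p) (hl : 0 < lam) (h : Gamma1 ε p lam = 0) :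
    DeltaEps ε p lam = (p + lam) / (1 + lam) - p := by
  have hL : 0 < log (1 + lam / p) := log_pos (by simp [hl, hp0])
  rw [DeltaEps, sub_left_inj, div_eq_div_iff hL.ne' (by positivity)]
  rw [Gamma1] at h
  linarith

lemma klBer_tilt_eq_of_Gamma1_eq_zero (hp0 : 0 < p) (hp1 : p < 1) (hl : 0 < lam)
    (h : Gamma1 ε p lam = 0) :
    klBer ((p + lam) / (1 + lam)) p = ε := by
  rw [klBer_tilt hp0 hp1 (by linarith), div_mul_eq_mul_div, sub_eq_iff_eq_add,
    div_eq_iff (by positivity)]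
  rw [Gamma1] at h
  linarith

lemma DeltaEps_eq_iInf_of_Gamma1_eq_zero (hp0 : 0 < p) (hp1 : p < 1) (hl : 0 < lam)
    (h : Gamma1 ε p lam = 0) :
    DeltaEps ε p lam = ⨅ l : Set.Ioi (0 : ℝ), DeltaEps ε p l := by
  have h1l : 0 < 1 + lam := by linarith
  have hlb : ∀ l : Set.Ioi (0 : ℝ), DeltaEps ε p lam ≤ DeltaEps ε p l := fun l => by
    rw [DeltaEps_eq_of_Gamma1_eq_zero hp0 hl h]
    exact sub_le_DeltaEps_of_klBer_le hp0 hp1 (by positivity)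
      ((div_lt_one h1l).mpr (by linarith)) (klBer_tilt_eq_of_Gamma1_eq_zero hp0 hp1 hl h).le
      l.2
  exact le_antisymm (le_ciInf hlb) (ciInf_le ⟨_, Set.forall_mem_range.mpr hlb⟩ ⟨lam, hl⟩)

end DeltaEps

lemma omegaKL_eq_of_klBer_eq {ε p x : ℝ} (hε : 0 < ε) (hp0 : 0 < p) (hpε : p ≤ exp (-ε))
    (hpx : p < x) (hx1 : x < 1) (hkl : klBer x p = ε) :
    omegaKL p ε = x - p := by
  rw [omegaKL, if_neg hp0.ne', if_pos hpε]
  refine IsLeast.csInf_eq ⟨⟨⟨by linarith, by linarith⟩, by rwa [add_sub_cancel]⟩, ?_⟩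
  rintro η ⟨⟨hη0, -⟩, hη⟩
  by_contra! hlt
  rcases hη0.eq_or_lt with rfl | hη0
  · rw [add_zero, klBer_self] at hη
    exact hε.ne hη
  · exact (klBer_lt_klBer_of_lt hp0 (by linarith) (by linarith) hx1).ne (hη.trans hkl.symm)

theorem Delta_at_minimiser_general (ε : ℝ) (hε : 0 < ε)
    (p : ℝ) (hp : p ∈ Set.Ioo (0 : ℝ) (Real.exp (-ε)))
    (lam0 : ℝ) (hlam0 : 0 < lam0) (hroot : Gamma1 ε p lam0 = 0) :
    p + DeltaEps ε p lam0 = (p + lam0) / (1 + lam0) ∧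
    (p + lam0) / (1 + lam0) ∈ Set.Ioo p 1 ∧
    klBer (p + DeltaEps ε p lam0) p = ε ∧
    DeltaEps ε p lam0 = (⨅ lam : Set.Ioi (0 : ℝ), DeltaEps ε p lam) ∧
    DeltaEps ε p lam0 = omegaKL p ε ∧
    0 < DeltaEps ε p lam0 := by
  obtain ⟨hp0, hpε⟩ := hp
  have hp1 : p < 1 := hpε.trans (exp_lt_one_iff.mpr (neg_neg_of_pos hε))
  have h1l : 0 < 1 + lam0 := by linarith
  have hΔ := DeltaEps_eq_of_Gamma1_eq_zero hp0 hlam0 hroot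
  have hqp : p < (p + lam0) / (1 + lam0) := by
    rw [lt_div_iff₀ h1l]
    nlinarith
  have hq1 : (p + lam0) / (1 + lam0) < 1 := (div_lt_one h1l).mpr (by linarith)
  have hkl := klBer_tilt_eq_of_Gamma1_eq_zero hp0 hp1 hlam0 hroot
  rw [hΔ, add_sub_cancel]
  exact ⟨rfl, ⟨hqp, hq1⟩, hkl, hΔ ▸ DeltaEps_eq_iInf_of_Gamma1_eq_zero hp0 hp1 hlam0 hroot,
    (omegaKL_eq_of_klBer_eq hε hp0 hpε.le hqp hq1 hkl).symm, sub_pos.mpr hqp⟩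

/-- For `ε > 0`, `p ∈ (0, e^{-ε})` and `λ̲(p)` the unique zero of `λ ↦ Γ₁(p,λ)` on
`(0,∞)`: `p + Δ_ε(p, λ̲(p)) = (p + λ̲(p))/(1 + λ̲(p)) ∈ (p, 1)`,
`kl(p + Δ_ε(p, λ̲(p)) ‖ p) = ε`, and
`Δ_ε(p, λ̲(p)) = inf_{λ > 0} Δ_ε(p, λ) = ω(p, ε) > 0`. -/
theorem Delta_at_minimiser (ε : ℝ) (hε : 0 < ε)
    (p : ℝ) (hp : p ∈ Set.Ioo (0 : ℝ) (Real.exp (-ε)))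
    (lam0 : ℝ) (hlam0 : 0 < lam0) (hroot : Gamma1 ε p lam0 = 0)
    (huniq : ∀ lam : ℝ, 0 < lam → Gamma1 ε p lam = 0 → lam = lam0) :
    p + DeltaEps ε p lam0 = (p + lam0) / (1 + lam0) ∧
    (p + lam0) / (1 + lam0) ∈ Set.Ioo p 1 ∧
    klBer (p + DeltaEps ε p lam0) p = ε ∧
    DeltaEps ε p lam0 = (⨅ lam : Set.Ioi (0 : ℝ), DeltaEps ε p lam) ∧
    DeltaEps ε p lam0 = omegaKL p ε ∧
    0 < DeltaEps ε p lam0 :=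
  Delta_at_minimiser_general ε hε p hp lam0 hlam0 hroot
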